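/- arXiv:math/0001119 — 8 statements merged into one kernel-verified Lean document; each statement's English description precedes it below -/
import Mathlib

section
/- Let S be a finite rigid semiring. Then the ℤ-linear extension of the conjugation * to the enveloping ring A(S) is an anti-endomorphism: (xy)* = y* x* for all x, y ∈ A(S). -/
/-!
STATEMENT 0: Let `S` be a finite rigid semiring (in the sense of the paper:
structure constants `m : S → S → S → ℕ` with associativity, an identity `e`,
and a conjugation `conj : S → S` satisfying `m s t u = m (conj s) u t`).
Then the ℤ-linear extension of the conjugation to the enveloping ring `A(S)`
(whose elements we model as functions `S → ℤ`, with multiplication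
`(x*y)(u) = ∑ s, ∑ t, x s * y t * m s t u` and conjugation
`(x*)(u) = ∑ s with conj s = u, x s`) is an anti-endomorphism:
`(x*y)* = y* * x*` for all `x y ∈ A(S)`.
-/
theorem stmt0 {S : Type*} [Fintype S] [DecidableEq S]
    (m : S → S → S → ℕ) (e : S)
    (hassoc : ∀ x₁ x₂ x₃ x : S,
      ∑ t : S, m x₁ t x * m x₂ x₃ t = ∑ s : S, m x₁ x₂ s * m s x₃ x)
    (hid_right : ∀ s t : S, m s e t = if s = t then 1 else 0)
    (hid_left : ∀ s t : S, m e s t = if s = t then 1 else 0)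
    (conj : S → S)
    (hrigid : ∀ s t u : S, m s t u = m (conj s) u t)
    (mul : (S → ℤ) → (S → ℤ) → (S → ℤ))
    (hmul : ∀ x y u, mul x y u = ∑ s : S, ∑ t : S, x s * y t * (m s t u : ℤ))
    (starExt : (S → ℤ) → (S → ℤ))
    (hstarExt : ∀ x u, starExt x u = ∑ s : S, if conj s = u then x s else 0) :
    ∀ x y : S → ℤ, starExt (mul x y) = mul (starExt y) (starExt x) := by
  -- conj is an involution
  have hinv : ∀ s, conj (conj s) = s := by
    intro s
    have h1 := hrigid s e (conj (conj s))
    have h2 := hrigid (conj s) (conj (conj s)) e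
    rw [h2, hid_right, hid_right] at h1
    simp only [if_pos rfl] at h1
    by_contra hne
    rw [if_neg (fun h => hne h.symm)] at h1
    exact absurd h1 (by norm_num)
  -- dual basis: m s t e = δ_{conj s, t}
  have hdual : ∀ s t : S, m s t e = if conj s = t then 1 else 0 := by
    intro s t
    rw [hrigid, hid_right]
  -- cyclic symmetry
  have hcyc : ∀ s t u : S, m t u (conj s) = m s t (conj u) := by
    intro s t u
    have h := hassoc s t u e
    have hl : (∑ t' : S, m s t' e * m t u t') = m t u (conj s) := by
      simp only [hdual, ite_mul, one_mul, zero_mul]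
      rw [Finset.sum_ite_eq Finset.univ (conj s) (fun t' => m t u t')]
      simp
    have hr : (∑ v : S, m s t v * m v u e) = m s t (conj u) := by
      have : ∀ v : S, m s t v * m v u e = if v = conj u then m s t v else 0 := by
        intro v
        rw [hdual]
        by_cases hv : conj v = u
        · rw [if_pos hv, if_pos (by rw [← hv, hinv]), mul_one]
        · rw [if_neg hv, if_neg (fun h => hv (by rw [h, hinv])), mul_zero]
      rw [Finset.sum_congr rfl fun v _ => this v,
        Finset.sum_ite_eq' Finset.univ (conj u) (fun v => m s t v)]
      simp
    rw [hl, hr] at h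
    exact h
  -- key identity
  have hkey : ∀ s t u : S, m (conj s) (conj t) u = m t s (conj u) := by
    intro s t u
    have h1 := hcyc (conj u) (conj s) (conj t)
    have h2 := hcyc (conj t) (conj u) (conj s)
    simp only [hinv] at h1 h2
    rw [h1, h2, ← hrigid]
  -- starExt is composition with conj
  have hstar' : ∀ z : S → ℤ, ∀ u : S, starExt z u = z (conj u) := by
    intro z u
    rw [hstarExt]
    have : ∀ s : S, (if conj s = u then z s else 0) = (if s = conj u then z s else 0) := by
      intro s
      by_cases hs : conj s = u
      · rw [if_pos hs, if_pos (by rw [← hs, hinv])]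
      · rw [if_neg hs, if_neg (fun h => hs (by rw [h, hinv]))]
    rw [Finset.sum_congr rfl fun s _ => this s,
      Finset.sum_ite_eq' Finset.univ (conj u) z]
    simp
  intro x y
  funext u
  rw [hstar', hmul, hmul]
  simp only [hstar']
  have eC : S ≃ S := Function.Involutive.toPerm conj hinv
  calc (∑ s : S, ∑ t : S, x s * y t * (m s t (conj u) : ℤ))
      = ∑ s : S, ∑ t : S, x s * y t * (m (conj t) (conj s) u : ℤ) := by
        refine Finset.sum_congr rfl fun s _ => Finset.sum_congr rfl fun t _ => ?_
        rw [hkey t s u]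
    _ = ∑ t : S, ∑ s : S, x s * y t * (m (conj t) (conj s) u : ℤ) := Finset.sum_comm
    _ = ∑ t : S, ∑ s : S,
          (fun a b => y (conj a) * x (conj b) * (m a b u : ℤ)) (conj t) (conj s) := by
        refine Finset.sum_congr rfl fun t _ => Finset.sum_congr rfl fun s _ => ?_
        simp only [hinv]
        ring
    _ = ∑ t : S, ∑ s : S, (fun a b => y (conj a) * x (conj b) * (m a b u : ℤ)) t s := by
        refine Eq.trans ?_ (Equiv.sum_comp (Function.Involutive.toPerm conj hinv)
          (fun a => ∑ s : S, (fun a b => y (conj a) * x (conj b) * (m a b u : ℤ)) a s))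
        refine Finset.sum_congr rfl fun t _ => ?_
        exact Equiv.sum_comp (Function.Involutive.toPerm conj hinv)
          (fun b => (fun a c => y (conj a) * x (conj c) * (m a c u : ℤ)) (conj t) b)
    _ = ∑ s : S, ∑ t : S, y (conj s) * x (conj t) * (m s t u : ℤ) := rfl
end

section
/- Let S be a finite rigid semiring and d a degree map for S. Then the element ρ = Σ_{s∈S} d(s*)·[s] of the enveloping ring A(S) satisfies x·ρ = d(x)·ρ for every x ∈ A(S), where d is extended ℤ-linearly to a map A(S) → ℤ (equivalently, [t]·ρ = d(t)·ρ for every t ∈ S). -/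
/-!
STATEMENT 1: Let `S` be a finite rigid semiring and `d` a degree map for `S`.
Then `ρ = ∑ s, d(s*)·[s]` (modelled as the function `u ↦ d (conj u)`) in the
enveloping ring `A(S)` (modelled as functions `S → ℤ` with convolution product)
satisfies `x·ρ = d(x)·ρ` for every `x ∈ A(S)`, where `d` is extended ℤ-linearly
to `A(S) → ℤ` by `x ↦ ∑ s, x s * d s`.
-/
theorem stmt1 {S : Type*} [Fintype S] [DecidableEq S]
    (m : S → S → S → ℕ) (e : S)
    (hassoc : ∀ x₁ x₂ x₃ x : S,
      ∑ t : S, m x₁ t x * m x₂ x₃ t = ∑ s : S, m x₁ x₂ s * m s x₃ x)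
    (hid_right : ∀ s t : S, m s e t = if s = t then 1 else 0)
    (hid_left : ∀ s t : S, m e s t = if s = t then 1 else 0)
    (conj : S → S)
    (hrigid : ∀ s t u : S, m s t u = m (conj s) u t)
    (d : S → ℕ)
    (hdeg : ∀ s₁ s₂ : S, d s₁ * d s₂ = ∑ s : S, m s₁ s₂ s * d s)
    (mul : (S → ℤ) → (S → ℤ) → (S → ℤ))
    (hmul : ∀ x y u, mul x y u = ∑ s : S, ∑ t : S, x s * y t * (m s t u : ℤ))
    (ρ : S → ℤ)
    (hρ : ∀ u : S, ρ u = (d (conj u) : ℤ)) :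
    ∀ x : S → ℤ, mul x ρ = (∑ s : S, x s * (d s : ℤ)) • ρ := by
  -- conj is an involution
  have hinv : ∀ s, conj (conj s) = s := by
    intro s
    have h1 : m (conj (conj s)) e s = 1 := by
      rw [← hrigid, ← hrigid, hid_right]; simp
    have h2 := hid_right (conj (conj s)) s
    rw [h2] at h1
    by_contra hne
    simp [hne] at h1
  have hinj : Function.Injective conj := Function.Involutive.injective hinv
  -- cyclic identity from associativity with identity element
  have hI : ∀ a b c : S, m b c (conj a) = m a b (conj c) := by
    intro a b c
    have h := hassoc a b c e
    have l : ∀ t, m a t e = if conj a = t then 1 else 0 := fun t => by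
      rw [hrigid, hid_right]
    have r : ∀ w, m w c e = if w = conj c then 1 else 0 := fun w => by
      rw [hrigid, hid_right]
      by_cases hw : w = conj c
      · simp [hw, hinv]
      · have : conj w ≠ c := fun hc => hw (by rw [← hc, hinv])
        simp [hw, this]
    simp only [l, r, ite_mul, one_mul, zero_mul, mul_ite, mul_one, mul_zero,
      Finset.sum_ite_eq, Finset.sum_ite_eq', Finset.mem_univ, if_true] at h
    exact h
  -- full cyclicity: m s t u = m (conj t) (conj s) (conj u)
  have hL : ∀ s t u : S, m s t u = m (conj t) (conj s) (conj u) := by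
    intro s t u
    have h1 : m s t u = m (conj u) s (conj t) := by
      have := hI (conj u) s t
      rwa [hinv] at this
    have h2 : m (conj u) s (conj t) = m t (conj u) (conj s) := hI t (conj u) s
    rw [h1, h2, hrigid]
  -- d ∘ conj is multiplicative against m in the third slot
  have key1 : ∀ a b : S, ∑ t : S, m a b t * d (conj t) = d (conj b) * d (conj a) := by
    intro a b
    have e1 : ∑ t : S, m a b t * d (conj t)
        = ∑ t : S, m (conj b) (conj a) (conj t) * d (conj t) := by
      refine Finset.sum_congr rfl fun t _ => by rw [← hL]
    have e2 : ∑ t : S, m (conj b) (conj a) (conj t) * d (conj t)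
        = ∑ t : S, m (conj b) (conj a) t * d t := by
      exact Fintype.sum_bijective conj (Function.Involutive.bijective hinv) _ _
        (fun t => rfl)
    rw [e1, e2, ← hdeg]
  -- the key eigen-equation, coefficientwise over ℕ
  have key2 : ∀ s u : S, ∑ t : S, m s t u * d (conj t) = d (conj u) * d s := by
    intro s u
    have e1 : ∑ t : S, m s t u * d (conj t) = ∑ t : S, m (conj s) u t * d (conj t) := by
      refine Finset.sum_congr rfl fun t _ => by rw [hrigid]
    rw [e1, key1, hinv]
  -- conclude
  intro x
  funext u
  rw [hmul]
  have step : ∀ s : S, ∑ t : S, x s * ρ t * (m s t u : ℤ)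
      = x s * (d s : ℤ) * (d (conj u) : ℤ) := by
    intro s
    have : ∑ t : S, x s * ρ t * (m s t u : ℤ)
        = x s * ∑ t : S, ((m s t u * d (conj t) : ℕ) : ℤ) := by
      rw [Finset.mul_sum]
      refine Finset.sum_congr rfl fun t _ => by
        rw [hρ t]; push_cast; ring
    rw [this, ← Nat.cast_sum, key2 s u]
    push_cast; ring
  calc ∑ s : S, ∑ t : S, x s * ρ t * (m s t u : ℤ)
      = ∑ s : S, x s * (d s : ℤ) * (d (conj u) : ℤ) := Finset.sum_congr rfl fun s _ => step s
    _ = (∑ s : S, x s * (d s : ℤ)) • ρ u := by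
        rw [hρ u, smul_eq_mul, Finset.sum_mul]
end

section
/- Let S be a finite rigid semiring. Then the enveloping algebra A_ℚ(S) = A(S) ⊗_ℤ ℚ over the rational numbers is a semisimple ring. (Equivalently: a finite-dimensional associative unital ℚ-algebra possessing a basis (e_s)_{s∈S} whose structure constants are the nonnegative integers m(s,t,u) of a rigid semiring, with unit e_e, is semisimple.) -/
/-!
The coordinate form `(x, y) = ∑ₛ xₛ yₛ` of the basis is symmetric and positive definite, and
rigidity says that left multiplication by `b s` has adjoint left multiplication by `b (conj s)`.
Hence the orthogonal complement of a left ideal is again a left ideal, and by positive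
definiteness it is a complement, so every left ideal is a direct summand.
-/

open LinearMap (BilinForm)

namespace LinearMap.BilinForm

theorem restrict_nondegenerate_of_anisotropic {R M : Type*} [CommRing R] [AddCommGroup M]
    [Module R M] {B : BilinForm R M} (hB : ∀ x, B x x = 0 → x = 0) (W : Submodule R M) :
    (B.restrict W).Nondegenerate :=
  ⟨fun x hx => Subtype.ext (hB x (hx x)), fun x hx => Subtype.ext (hB x (hx x))⟩

variable {K A : Type*} [Field K] [Ring A] [Algebra K A] {B : BilinForm K A}

theorem mul_mem_orthogonal_of_isSymm (hB : B.IsSymm)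
    (hadj : ∀ x : A, ∃ x' : A, ∀ y z, B (x * y) z = B y (x' * z))
    (I : Submodule A A) (a : A) {z : A} (hz : z ∈ B.orthogonal (I.restrictScalars K)) :
    a * z ∈ B.orthogonal (I.restrictScalars K) := by
  obtain ⟨a', ha'⟩ := hadj a
  refine mem_orthogonal_iff.mpr fun y hy => ?_
  have hy' : a' * y ∈ I.restrictScalars K := I.smul_mem a' hy
  calc B y (a * z) = B (a * z) y := hB.eq y (a * z)
    _ = B z (a' * y) := ha' z y
    _ = B (a' * y) z := hB.eq z (a' * y)
    _ = 0 := hz _ hy'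

theorem isSemisimpleRing_of_anisotropic_of_isSymm [FiniteDimensional K A]
    (hani : ∀ x, B x x = 0 → x = 0) (hB : B.IsSymm)
    (hadj : ∀ x : A, ∃ x' : A, ∀ y z, B (x * y) z = B y (x' * z)) :
    IsSemisimpleRing A := by
  refine { exists_isCompl := fun I => ⟨{ B.orthogonal (I.restrictScalars K) with
    smul_mem' := fun a _ hz => mul_mem_orthogonal_of_isSymm hB hadj I a hz }, ?_⟩ }
  rw [← Submodule.isCompl_restrictScalars_iff K]
  exact isCompl_orthogonal_of_restrict_nondegenerate hB.isRefl
    (restrict_nondegenerate_of_anisotropic hani _)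

end LinearMap.BilinForm

namespace Module.Basis

variable {ι R : Type*} [Fintype ι] [CommRing R]

section toDual

variable [DecidableEq ι] {M : Type*} [AddCommGroup M] [Module R M] (b : Basis ι R M)

theorem toDual_apply_eq_sum (x y : M) : b.toDual x y = ∑ i, b.repr x i * b.repr y i := by
  nth_rw 1 [← b.sum_repr y]
  simp only [map_sum, map_smul, toDual_apply_left, smul_eq_mul, mul_comm]

theorem toDual_isSymm : LinearMap.BilinForm.IsSymm b.toDual :=
  ⟨fun x y => by simp only [toDual_apply_eq_sum, mul_comm]⟩

theorem toDual_self_eq_zero_iff [LinearOrder R] [IsStrictOrderedRing R] {x : M} :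
    b.toDual x x = 0 ↔ x = 0 := by
  refine ⟨fun h => b.repr.map_eq_zero_iff.mp (Finsupp.ext fun i => ?_), fun h => by simp [h]⟩
  rw [toDual_apply_eq_sum, Finset.sum_eq_zero_iff_of_nonneg fun _ _ => mul_self_nonneg _] at h
  exact mul_self_eq_zero.mp (h i (Finset.mem_univ i))

end toDual

section StructureConstants

variable {A : Type*} [Ring A] [Algebra R A] {m : ι → ι → ι → ℕ} {b : Basis ι R A}

theorem repr_basis_mul_basis (hb : ∀ i j, b i * b j = ∑ u, (m i j u : R) • b u) (s t u : ι) :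
    b.repr (b s * b t) u = m s t u := by
  classical
  simp [hb, Finsupp.single_apply]

variable [DecidableEq ι]

theorem toDual_basis_mul (hb : ∀ i j, b i * b j = ∑ u, (m i j u : R) • b u)
    {conj : ι → ι} (hrigid : ∀ s t u, m s t u = m (conj s) u t) (s : ι) (y z : A) :
    b.toDual (b s * y) z = b.toDual y (b (conj s) * z) := by
  have h : b.toDual.compl₁₂ (LinearMap.mulLeft R (b s)) LinearMap.id =
      b.toDual.compl₂ (LinearMap.mulLeft R (b (conj s))) :=
    LinearMap.BilinForm.ext_basis b fun t u => by
      simp [toDual_apply_left, toDual_apply_right, repr_basis_mul_basis hb, hrigid s t u]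
  exact LinearMap.congr_fun₂ h y z

theorem exists_toDual_mul_eq_toDual_mul (hb : ∀ i j, b i * b j = ∑ u, (m i j u : R) • b u)
    {conj : ι → ι} (hrigid : ∀ s t u, m s t u = m (conj s) u t) (x : A) :
    ∃ x', ∀ y z, b.toDual (x * y) z = b.toDual y (x' * z) := by
  have hx : x ∈ Submodule.span R (Set.range b) := b.span_eq ▸ Submodule.mem_top
  induction hx using Submodule.span_induction with
  | mem x hx =>
    obtain ⟨s, rfl⟩ := hx
    exact ⟨b (conj s), toDual_basis_mul hb hrigid s⟩
  | zero => exact ⟨0, by simp⟩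
  | add x₁ x₂ _ _ h₁ h₂ =>
    obtain ⟨x₁', h₁'⟩ := h₁
    obtain ⟨x₂', h₂'⟩ := h₂
    exact ⟨x₁' + x₂', fun y z => by simp [add_mul, h₁', h₂']⟩
  | smul c x _ h =>
    obtain ⟨x', h'⟩ := h
    exact ⟨c • x', fun y z => by simp [h']⟩

end StructureConstants

end Module.Basis

theorem stmt4_general {S : Type*} [Fintype S]
    (m : S → S → S → ℕ)
    (conj : S → S)
    (hrigid : ∀ s t u : S, m s t u = m (conj s) u t)
    (A : Type*) [Ring A] [Algebra ℚ A]
    (b : Module.Basis S ℚ A)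
    (hb : ∀ i j : S, b i * b j = ∑ u : S, (m i j u : ℚ) • b u) :
    IsSemisimpleRing A := by
  classical
  have : FiniteDimensional ℚ A := b.finiteDimensional_of_finite
  exact LinearMap.BilinForm.isSemisimpleRing_of_anisotropic_of_isSymm (B := b.toDual)
    (fun _ => b.toDual_self_eq_zero_iff.mp) b.toDual_isSymm
    (b.exists_toDual_mul_eq_toDual_mul hb hrigid)

theorem stmt4 {S : Type*} [Fintype S] [DecidableEq S]
    (m : S → S → S → ℕ) (e : S)
    (hassoc : ∀ x₁ x₂ x₃ x : S,
      ∑ t : S, m x₁ t x * m x₂ x₃ t = ∑ s : S, m x₁ x₂ s * m s x₃ x)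
    (hid_right : ∀ s t : S, m s e t = if s = t then 1 else 0)
    (hid_left : ∀ s t : S, m e s t = if s = t then 1 else 0)
    (conj : S → S)
    (hrigid : ∀ s t u : S, m s t u = m (conj s) u t)
    (A : Type*) [Ring A] [Algebra ℚ A]
    (b : Module.Basis S ℚ A)
    (hb : ∀ i j : S, b i * b j = ∑ u : S, (m i j u : ℚ) • b u)
    (hone : b e = 1) :
    IsSemisimpleRing A :=
  stmt4_general m conj hrigid A b hb
end

section
/- Let G be a finite group and φ an automorphism of G. If there exists an invertible element c of the complex group algebra ℂ[G] such that φ(g) = c·g·c⁻¹ in ℂ[G] for every g ∈ G, then φ is class-preserving, i.e. φ(g) is conjugate to g in G for every g ∈ G. -/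
/-!
The class sums `∑_{x ~ g} x` are central in `k[G]`, so conjugation by a unit `c` fixes them.
If conjugation by `c` induces `φ` on `G`, it also maps the class sum of `g` to that of `φ g`;
hence the two class sums coincide, and comparing coefficients at `φ g` gives `g ~ φ g`.
-/

theorem MulEquiv.isConj_apply_iff {α β : Type*} [Monoid α] [Monoid β] (φ : α ≃* β) {a b : α} :
    IsConj (φ a) (φ b) ↔ IsConj a b :=
  ⟨fun h => by simpa using φ.symm.toMonoidHom.map_isConj h, φ.toMonoidHom.map_isConj⟩

namespace MonoidAlgebra

variable {k G : Type*} [Group G] [Fintype G]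

open Classical in
noncomputable def classSum [Semiring k] (g : G) : MonoidAlgebra k G :=
  ∑ x with IsConj g x, of k G x

section Semiring

variable [Semiring k]

open Classical in
theorem coeff_classSum_apply (g y : G) :
    (classSum g : MonoidAlgebra k G).coeff y = if IsConj g y then 1 else 0 := by
  simp [classSum, Finsupp.finsetSum_apply, Finsupp.single_apply]

theorem isConj_of_classSum_eq [Nontrivial k] {g g' : G}
    (h : (classSum g : MonoidAlgebra k G) = classSum g') : IsConj g g' := by
  have h' := congrArg (fun a : MonoidAlgebra k G => a.coeff g') h
  simp only [coeff_classSum_apply, if_pos (IsConj.refl g')] at h'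
  by_contra hne
  rw [if_neg hne] at h'
  exact zero_ne_one h'

theorem classSum_eq_of_isConj {g g' : G} (h : IsConj g g') :
    (classSum g : MonoidAlgebra k G) = classSum g' := by
  unfold classSum
  congr 1
  ext x
  simp only [Finset.mem_filter, Finset.mem_univ, true_and]
  exact ⟨h.symm.trans, h.trans⟩

theorem classSum_apply_mul_eq_mul_classSum (φ : G ≃* G) {c : MonoidAlgebra k G}
    (hc : ∀ x, of k G (φ x) * c = c * of k G x) (g : G) :
    classSum (φ g) * c = c * classSum g := by
  classical
  have hreindex : classSum (φ g) = ∑ x with IsConj g x, of k G (φ x) := by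
    refine (Finset.sum_equiv φ.toEquiv (fun x => ?_) fun _ _ => rfl).symm
    simp only [Finset.mem_filter, Finset.mem_univ, true_and]
    exact φ.isConj_apply_iff.symm
  rw [hreindex, classSum, Finset.sum_mul, Finset.mul_sum]
  exact Finset.sum_congr rfl fun x _ => hc x

theorem of_commute_classSum (x g : G) : Commute (of k G x) (classSum g) := by
  have hconj : IsConj g (MulAut.conj x g) := isConj_iff.mpr ⟨x, rfl⟩
  have hintertwine : ∀ y, of k G (MulAut.conj x y) * of k G x = of k G x * of k G y := fun y => by
    rw [MulAut.conj_apply, ← map_mul, ← map_mul, inv_mul_cancel_right]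
  have h : classSum g * of k G x = of k G x * classSum g := calc
    classSum g * of k G x = classSum (MulAut.conj x g) * of k G x := by
      rw [classSum_eq_of_isConj hconj]
    _ = of k G x * classSum g := classSum_apply_mul_eq_mul_classSum (MulAut.conj x) hintertwine g
  exact h.symm

end Semiring

theorem commute_classSum [CommSemiring k] (a : MonoidAlgebra k G) (g : G) :
    Commute a (classSum g) := by
  induction a using MonoidAlgebra.induction_on with
  | of x => exact of_commute_classSum x g
  | add a b ha hb => exact ha.add_left hb
  | smul r a ha => exact ha.smul_left r

end MonoidAlgebra

theorem stmt8 (G : Type*) [Group G] [Fintype G] (φ : G ≃* G)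
    (c : (MonoidAlgebra ℂ G)ˣ)
    (hc : ∀ g : G, MonoidAlgebra.of ℂ G (φ g) =
        (c : MonoidAlgebra ℂ G) * MonoidAlgebra.of ℂ G g *
          ((c⁻¹ : (MonoidAlgebra ℂ G)ˣ) : MonoidAlgebra ℂ G)) :
    ∀ g : G, IsConj g (φ g) := by
  intro g
  have hintertwine : ∀ x, MonoidAlgebra.of ℂ G (φ x) * c = c * MonoidAlgebra.of ℂ G x :=
    fun x => by rw [hc, Units.inv_mul_cancel_right]
  refine MonoidAlgebra.isConj_of_classSum_eq (k := ℂ) (c.isUnit.mul_right_cancel ?_).symm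
  exact (MonoidAlgebra.classSum_apply_mul_eq_mul_classSum φ hintertwine g).trans
    (MonoidAlgebra.commute_classSum _ g).eq
end

section
/- Let R be a Galois G-algebra over a field k (G a finite group). Then R has no non-trivial G-invariant two-sided ideals: every two-sided ideal I of R with g·I = I for all g ∈ G satisfies I = 0 or I = R. -/
/-- The structure map `θ : ⊕_{g ∈ G} R → End_k(R)`, `θ(a·g)(b) = a * g(b)`, of a
`G`-algebra `R` (with `G` acting by `k`-algebra automorphisms via `act`). -/
noncomputable def galoisMap (k : Type*) {R G : Type*} [Field k] [Ring R]
    [Algebra k R] [Fintype G] [Group G] (act : G →* (R ≃ₐ[k] R)) :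
    (G → R) → (R →ₗ[k] R) :=
  fun f => ∑ g : G, (LinearMap.mulLeft k (f g)) ∘ₗ (act g).toLinearMap

/-!
STATEMENT 12: Let `R` be a Galois `G`-algebra over a field `k` (`G` a finite
group acting on the finite-dimensional `k`-algebra `R` by `k`-algebra
automorphisms, such that the map `θ` above is bijective).  Then `R` has no
non-trivial `G`-invariant two-sided ideals: every two-sided ideal `I` of `R`
with `g·I = I` for all `g ∈ G` satisfies `I = 0` or `I = R`.
-/
theorem stmt12 (k R G : Type*) [Field k] [Ring R] [Algebra k R]
    [FiniteDimensional k R] [Group G] [Fintype G]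
    (act : G →* (R ≃ₐ[k] R))
    (hGalois : Function.Bijective (galoisMap k act)) :
    ∀ I : TwoSidedIdeal R, (∀ (g : G) (x : R), x ∈ I → act g x ∈ I) →
      I = ⊥ ∨ I = ⊤ := by
  intro I hI
  by_cases hbot : I = ⊥
  · exact Or.inl hbot
  · right
    -- pick a nonzero element x ∈ I
    obtain ⟨x, hxI, hx0⟩ : ∃ x, x ∈ I ∧ x ≠ 0 := by
      by_contra h
      push_neg at h
      apply hbot
      apply TwoSidedIdeal.ext
      intro y
      simp only [TwoSidedIdeal.mem_bot]
      exact ⟨fun hy => h y hy, fun hy => hy ▸ I.zero_mem⟩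
    -- find a dual vector φ with φ x ≠ 0
    obtain ⟨φ, hφ⟩ : ∃ φ : Module.Dual k R, φ x ≠ 0 := by
      by_contra h
      push_neg at h
      exact hx0 ((Module.forall_dual_apply_eq_zero_iff k x).mp h)
    -- the linear map y ↦ (φ x)⁻¹ • φ y • 1 sends x to 1
    set Φ : R →ₗ[k] R := (φ x)⁻¹ • ((LinearMap.toSpanSingleton k R 1).comp φ) with hΦ
    have hΦx : Φ x = 1 := by
      simp only [hΦ, LinearMap.smul_apply, LinearMap.comp_apply,
        LinearMap.toSpanSingleton_apply]
      rw [smul_smul, inv_mul_cancel₀ hφ, one_smul]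
    obtain ⟨f, hf⟩ := hGalois.2 Φ
    have h1 : (1 : R) ∈ I := by
      rw [← hΦx, ← hf]
      have : galoisMap k act f x = ∑ g : G, f g * act g x := by
        simp [galoisMap]
      rw [this]
      exact TwoSidedIdeal.finsetSum_mem _ _ _ (fun g _ => I.mul_mem_left _ _ (hI g x hxI))
    apply TwoSidedIdeal.ext
    intro y
    simp only [TwoSidedIdeal.mem_top, iff_true]
    simpa using I.mul_mem_left y 1 h1
end

section
/- Let R be a Galois G-algebra over a field k (G a finite group). Then R is a semisimple ring. -/
theorem Module.End.isSimpleRing (k V : Type*) [Field k] [AddCommGroup V] [Module k V]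
    [FiniteDimensional k V] [Nontrivial V] : IsSimpleRing (Module.End k V) :=
  have : Nonempty (Fin (Module.finrank k V)) := ⟨⟨0, Module.finrank_pos⟩⟩
  .of_ringEquiv (algEquivMatrix (Module.finBasis k V)).symm.toRingEquiv inferInstance

theorem Ring.jacobson_le_comap_ringEquiv {R : Type*} [Ring R] (e : R ≃+* R) :
    Ring.jacobson R ≤ (Ring.jacobson R).comap e :=
  have : RingHomSurjective (e : R →+* R) := ⟨e.surjective⟩
  Ring.le_comap_jacobson (e : R →+* R)

section galoisMap

variable {k R G : Type*} [Field k] [Ring R] [Algebra k R] [Group G] [Fintype G]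
  (act : G →* (R ≃ₐ[k] R))

theorem galoisMap_zero : galoisMap k act 0 = 0 := by
  ext; simp [galoisMap]

theorem galoisMap_add (f f' : G → R) :
    galoisMap k act (f + f') = galoisMap k act f + galoisMap k act f' := by
  ext; simp [galoisMap, add_mul, Finset.sum_add_distrib]

theorem galoisMap_neg (f : G → R) : galoisMap k act (-f) = -galoisMap k act f := by
  ext; simp [galoisMap]

/-- Composition corresponds to the product of the skew group ring `R ⋊ G`. -/
theorem galoisMap_mul (f f' : G → R) :
    galoisMap k act f * galoisMap k act f' =
      galoisMap k act (fun m => ∑ g : G, f g * act g (f' (g⁻¹ * m))) := by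
  ext b
  simp only [galoisMap, Module.End.mul_apply, LinearMap.coe_sum, Finset.sum_apply,
    LinearMap.comp_apply, LinearMap.mulLeft_apply, AlgEquiv.toLinearMap_apply, map_mul,
    Finset.mul_sum, Finset.sum_mul]
  rw [Finset.sum_comm]
  conv_rhs => rw [Finset.sum_comm]
  refine Finset.sum_congr rfl fun g _ => Fintype.sum_equiv (Equiv.mulLeft g) _ _ fun h => ?_
  simp only [Equiv.coe_mulLeft, inv_mul_cancel_left, map_mul, AlgEquiv.mul_apply, mul_assoc]

theorem galoisMap_single_one [DecidableEq G] (a : R) :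
    galoisMap k act (Pi.single 1 a) = LinearMap.mulLeft k a := by
  ext b
  simp only [galoisMap, LinearMap.coe_sum, Finset.sum_apply, LinearMap.comp_apply,
    LinearMap.mulLeft_apply, AlgEquiv.toLinearMap_apply]
  rw [Finset.sum_eq_single 1 (fun g _ hg => by simp [Pi.single_eq_of_ne hg]) (by simp)]
  simp

variable {act}

def galoisIdeal (hθ : Function.Surjective (galoisMap k act)) (I : Ideal R) [I.IsTwoSided]
    (hI : ∀ g, ∀ a ∈ I, act g a ∈ I) : TwoSidedIdeal (Module.End k R) :=
  .mk' (galoisMap k act '' {f | ∀ g, f g ∈ I})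
    ⟨0, fun _ => I.zero_mem, galoisMap_zero act⟩
    (by
      rintro _ _ ⟨f, hf, rfl⟩ ⟨f', hf', rfl⟩
      exact ⟨f + f', fun g => I.add_mem (hf g) (hf' g), galoisMap_add act f f'⟩)
    (by
      rintro _ ⟨f, hf, rfl⟩
      exact ⟨-f, fun g => I.neg_mem (hf g), galoisMap_neg act f⟩)
    (by
      rintro x _ ⟨f', hf', rfl⟩
      obtain ⟨f, rfl⟩ := hθ x
      exact ⟨_, fun m => I.sum_mem fun g _ => I.mul_mem_left _ (hI g _ (hf' _)),
        (galoisMap_mul act f f').symm⟩)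
    (by
      rintro _ y ⟨f, hf, rfl⟩
      obtain ⟨f', rfl⟩ := hθ y
      exact ⟨_, fun m => I.sum_mem fun g _ => I.mul_mem_right _ (hf g),
        (galoisMap_mul act f f').symm⟩)

theorem mem_galoisIdeal {hθ : Function.Surjective (galoisMap k act)} {I : Ideal R} [I.IsTwoSided]
    {hI : ∀ g, ∀ a ∈ I, act g a ∈ I} {φ : Module.End k R} :
    φ ∈ galoisIdeal hθ I hI ↔ ∃ f : G → R, (∀ g, f g ∈ I) ∧ galoisMap k act f = φ :=
  TwoSidedIdeal.mem_mk' ..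

theorem eq_bot_or_eq_top_of_bijective_galoisMap [FiniteDimensional k R]
    (hθ : Function.Bijective (galoisMap k act)) (I : Ideal R) [I.IsTwoSided]
    (hI : ∀ g, ∀ a ∈ I, act g a ∈ I) : I = ⊥ ∨ I = ⊤ := by
  classical
  refine or_iff_not_imp_left.mpr fun hne => ?_
  obtain ⟨a, haI, ha⟩ := Submodule.exists_mem_ne_zero_of_ne_bot hne
  have : Nontrivial R := ⟨⟨a, 0, ha⟩⟩
  have := Module.End.isSimpleRing k R
  have hmulLeft : LinearMap.mulLeft k a ∈ galoisIdeal hθ.surjective I hI := by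
    refine mem_galoisIdeal.mpr ⟨Pi.single 1 a, fun g => ?_, galoisMap_single_one act a⟩
    rcases eq_or_ne g 1 with rfl | hg
    · simpa using haI
    · simp [Pi.single_eq_of_ne hg]
  have hne0 : LinearMap.mulLeft k a ≠ 0 := fun h => ha (by simpa using congr($h 1))
  obtain ⟨f, hfI, hf⟩ := mem_galoisIdeal.mp
    (IsSimpleRing.one_mem_of_ne_zero_mem _ hne0 hmulLeft)
  have hf1 : f = Pi.single 1 1 := hθ.injective <| by
    rw [hf, galoisMap_single_one, LinearMap.mulLeft_one]; rfl
  simpa [hf1, Ideal.eq_top_iff_one] using hfI 1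

end galoisMap

theorem stmt13 (k R G : Type*) [Field k] [Ring R] [Algebra k R]
    [FiniteDimensional k R] [Group G] [Fintype G]
    (act : G →* (R ≃ₐ[k] R))
    (hGalois : Function.Bijective (galoisMap k act)) :
    IsSemisimpleRing R := by
  have := IsArtinianRing.of_finite k R
  refine IsArtinianRing.isSemisimpleRing_iff_jacobson.mpr ?_
  rcases subsingleton_or_nontrivial R with _ | _
  · exact Subsingleton.elim _ _
  have hstable : ∀ g, ∀ a ∈ Ring.jacobson R, act g a ∈ Ring.jacobson R := fun g _ ha =>
    Ring.jacobson_le_comap_ringEquiv (act g).toRingEquiv ha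
  exact (eq_bot_or_eq_top_of_bijective_galoisMap hGalois _ hstable).resolve_right
    (Ring.jacobson_lt_top R).ne
end

section
/- Let R be a Galois G-algebra over a field k (G a finite group). Then G acts transitively on the set of maximal two-sided ideals of R: for any two maximal two-sided ideals M and M' of R there exists g ∈ G with g·M = M' (i.e. x ∈ M ⟺ g·x ∈ M'). -/
/-- Pulling back a maximal two-sided ideal along a ring equivalence gives a
maximal two-sided ideal. -/
lemma isCoatom_comap_of_ringEquiv {R : Type*} [Ring R] (e : R ≃+* R)
    {M : TwoSidedIdeal R} (hM : IsCoatom M) :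
    IsCoatom (M.comap (e : R →+* R)) := by
  have key : ∀ (I : TwoSidedIdeal R),
      (I.comap (e.symm : R →+* R)).comap (e : R →+* R) = I := by
    intro I
    ext x
    simp [TwoSidedIdeal.mem_comap]
  constructor
  · intro htop
    have h1 : (1 : R) ∈ M.comap (e : R →+* R) := htop ▸ trivial
    rw [TwoSidedIdeal.mem_comap] at h1
    simp only [map_one] at h1
    exact hM.1 (eq_top_iff.2 fun y _ => by simpa using M.mul_mem_left y 1 h1)
  · intro X hX
    have hle : M ≤ X.comap (e.symm : R →+* R) := by
      intro y hy
      rw [TwoSidedIdeal.mem_comap]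
      exact le_of_lt hX (by rw [TwoSidedIdeal.mem_comap]; simpa using hy)
    have hne : M ≠ X.comap (e.symm : R →+* R) := by
      intro h
      exact hX.ne (by rw [h, key])
    have htop := hM.2 _ (lt_of_le_of_ne hle hne)
    rw [eq_top_iff]
    intro x _
    have hx : e x ∈ X.comap (e.symm : R →+* R) := htop ▸ trivial
    rw [TwoSidedIdeal.mem_comap] at hx
    simpa using hx

/-!
STATEMENT 14: Let `R` be a Galois `G`-algebra over a field `k` (`G` a finite
group).  Then `G` acts transitively on the set of maximal two-sided ideals of
`R`: for any two maximal two-sided ideals `M`, `M'` of `R` (i.e. coatoms in the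
lattice of two-sided ideals) there is `g ∈ G` with `g·M = M'`, i.e.
`x ∈ M ↔ g·x ∈ M'`.
-/
theorem stmt14 (k R G : Type*) [Field k] [Ring R] [Algebra k R]
    [FiniteDimensional k R] [Group G] [Fintype G]
    (act : G →* (R ≃ₐ[k] R))
    (hGalois : Function.Bijective (galoisMap k act)) :
    ∀ M M' : TwoSidedIdeal R, IsCoatom M → IsCoatom M' →
      ∃ g : G, ∀ x : R, x ∈ M ↔ act g x ∈ M' := by
  intro M M' hM hM'
  by_contra hcon
  push_neg at hcon
  -- For each `g`, let `N g` be the pullback of `M'` along `act g`.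
  set N : G → TwoSidedIdeal R := fun g =>
    M'.comap (((act g : R ≃ₐ[k] R) : R ≃+* R) : R →+* R) with hNdef
  have hNmem : ∀ g x, x ∈ N g ↔ act g x ∈ M' := fun g x =>
    TwoSidedIdeal.mem_comap _
  have hNcoatom : ∀ g, IsCoatom (N g) := fun g =>
    isCoatom_comap_of_ringEquiv ((act g : R ≃ₐ[k] R) : R ≃+* R) hM'
  -- `M ≠ N g` for all `g`, since otherwise `g` would witness the conclusion.
  have hMneq : ∀ g, M ≠ N g := by
    intro g h
    obtain ⟨x, hx⟩ := hcon g
    have hiff : x ∈ M ↔ act g x ∈ M' := h ▸ hNmem g x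
    rcases hx with ⟨h1, h2⟩ | ⟨h1, h2⟩
    · exact h2 (hiff.1 h1)
    · exact h1 (hiff.2 h2)
  -- Distinct coatoms are comaximal.
  have hsup : ∀ g, M ⊔ N g = ⊤ := by
    intro g
    rcases lt_or_eq_of_le (le_sup_left : M ≤ M ⊔ N g) with h | h
    · exact hM.2 _ h
    · exfalso
      have hle : N g ≤ M := by rw [h]; exact le_sup_right
      rcases lt_or_eq_of_le hle with h2 | h2
      · exact hM.1 ((hNcoatom g).2 _ h2)
      · exact hMneq g h2.symm
  -- For each `g`, find `m ∈ N g` with `1 - m ∈ M`.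
  have hpick : ∀ g, ∃ m, m ∈ N g ∧ 1 - m ∈ M := by
    intro g
    have h1 : (1 : R) ∈ M ⊔ N g := (hsup g) ▸ trivial
    rw [TwoSidedIdeal.mem_sup] at h1
    obtain ⟨a, ha, b, hb, hab⟩ := h1
    exact ⟨b, hb, by rw [← hab]; simpa using ha⟩
  -- By induction, find `x ∈ N g` for all `g` with `1 - x ∈ M`.
  have hind : ∀ s : Finset G, ∃ x, (1 - x ∈ M) ∧ ∀ g ∈ s, x ∈ N g := by
    intro s
    induction s using Finset.cons_induction with
    | empty => exact ⟨1, by simp [TwoSidedIdeal.zero_mem], by simp⟩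
    | cons g s' hg ih =>
      obtain ⟨x, hx1, hx2⟩ := ih
      obtain ⟨m, hm1, hm2⟩ := hpick g
      refine ⟨x * m, ?_, ?_⟩
      · have heq : 1 - x * m = (1 - x) + x * (1 - m) := by noncomm_ring
        rw [heq]
        exact M.add_mem hx1 (M.mul_mem_left x _ hm2)
      · intro g' hg'
        rcases Finset.mem_cons.1 hg' with rfl | hg'
        · exact (N g').mul_mem_left x m hm1
        · exact (N g').mul_mem_right _ m (hx2 g' hg')
  obtain ⟨x, hx1, hx2⟩ := hind Finset.univ
  -- `x ≠ 0` since `1 ∉ M`.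
  have hMne : M ≠ ⊤ := hM.1
  have hone : (1 : R) ∉ M := by
    intro h
    exact hMne (eq_top_iff.2 fun y _ => by simpa using M.mul_mem_left y 1 h)
  have hxne : x ≠ 0 := by
    rintro rfl
    exact hone (by simpa using hx1)
  -- Choose a linear map `φ` with `φ x = 1`.
  have hinj : LinearMap.ker (LinearMap.toSpanSingleton k R x) = ⊥ := by
    rw [LinearMap.ker_eq_bot]
    intro a b hab
    simp only [LinearMap.toSpanSingleton_apply] at hab
    by_contra hne
    have := sub_eq_zero.2 hab
    rw [← sub_smul] at this
    rcases smul_eq_zero.1 this with h | h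
    · exact hne (sub_eq_zero.1 h)
    · exact hxne h
  obtain ⟨ψ, hψ⟩ := (LinearMap.toSpanSingleton k R x).exists_leftInverse_of_injective hinj
  set φ : R →ₗ[k] R := (LinearMap.toSpanSingleton k R 1) ∘ₗ ψ with hφdef
  have hφx : φ x = 1 := by
    have : ψ x = 1 := by
      have := LinearMap.congr_fun hψ (1 : k)
      simpa [LinearMap.toSpanSingleton_apply] using this
    simp [hφdef, this]
  -- Write `φ` via the Galois map and derive `1 ∈ M'`.
  obtain ⟨f, hf⟩ := hGalois.2 φ
  have h1 : (1 : R) = ∑ g : G, f g * act g x := by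
    rw [← hφx, ← hf]
    simp [galoisMap, LinearMap.sum_apply]
  have hmem : (1 : R) ∈ M' := by
    rw [h1]
    exact M'.finsetSum_mem _ _ fun g _ =>
      M'.mul_mem_left _ _ ((hNmem g x).1 (hx2 g (Finset.mem_univ g)))
  exact hM'.1 (eq_top_iff.2 fun y _ => by simpa using M'.mul_mem_left y 1 hmem)
end

section
/- There is an automorphism of the character table of the symmetric group S₄ that does not correspond to any group automorphism: there exist a bijection α of the set of conjugacy classes of S₄ and a bijection β of the set of irreducible complex characters of S₄ such that β(χ)(α(C)) = χ(C) for every irreducible character χ and every conjugacy class C, and α maps the conjugacy class of a transposition (class 2A) to the conjugacy class of a 4-cycle (class 4A); in particular α is not induced by any automorphism of S₄. -/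
/-!
The Klein four-group `K` is normal in `S₄`, so by Schur's lemma `∑_{k ∈ K} ρ k` acts on an
irreducible representation as a scalar `μ`, and `μ² = 4μ` forces `μ ∈ {0, 4}`. Taking the trace
against a transposition `t`, the products `t k` are `t`, one more transposition and two 4-cycles,
so `2 χ(2A) + 2 χ(4A) ∈ {0, 4 χ(2A)}`, i.e. `χ(4A) = ± χ(2A)` for every irreducible `χ`.
Hence swapping the classes `2A` and `4A`, while fixing the characters with `χ(2A) = χ(4A)` and
multiplying the others by the sign character (which is `-1` on `2A`, `4A` and `1` on the other
classes), is an automorphism of the character table. No automorphism of `S₄` maps an element of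
order 2 to one of order 4.
-/

/-- The set of irreducible (complex) characters of a finite group `G`: the
characters of the simple objects of the category of finite-dimensional complex
representations of `G`. -/
def IrrChar (G : Type) [Group G] [Fintype G] : Type :=
  {χ : G → ℂ // ∃ V : FDRep ℂ G, CategoryTheory.Simple V ∧ χ = FDRep.character V}

universe u

open CategoryTheory

namespace Representation

variable {k G V : Type*} [CommRing k] [Group G] [AddCommGroup V] [Module k V]

theorem commute_norm_comp_subtype (ρ : Representation k G V) (N : Subgroup G) [Fintype N]
    [N.Normal] (g : G) : Commute (ρ g) (norm (ρ.comp N.subtype)) := by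
  simp only [Commute, SemiconjBy, norm, Finset.mul_sum, Finset.sum_mul]
  refine Fintype.sum_equiv (MulAut.conjNormal g).toEquiv _ _ fun n => ?_
  simp only [MonoidHom.comp_apply, Subgroup.coe_subtype, MulEquiv.toEquiv_eq_coe,
    EquivLike.coe_coe, MulAut.conjNormal_apply, ← map_mul]
  group

theorem norm_mul_norm (ρ : Representation k G V) [Fintype G] :
    norm ρ * norm ρ = Fintype.card G • norm ρ := calc
  norm ρ * norm ρ = ∑ g : G, ρ g * norm ρ := Finset.sum_mul _ _ _
  _ = ∑ _g : G, norm ρ := by simp only [Module.End.mul_eq_comp, self_comp_norm]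
  _ = Fintype.card G • norm ρ := by rw [Finset.sum_const, Finset.card_univ]

end Representation

namespace FDRep

section Schur

variable {k G : Type u} [Field k] [Monoid G]

def homOfCommute (V : FDRep k G) (f : V →ₗ[k] V) (hf : ∀ g, Commute (V.ρ g) f) : V ⟶ V where
  hom := FGModuleCat.ofHom f
  comm g := FGModuleCat.hom_ext (hf g).symm.eq

theorem one_ne_zero_of_simple (V : FDRep k G) [Simple V] : (1 : Module.End k V) ≠ 0 := fun h =>
  id_nonzero V (Action.hom_ext _ _ (FGModuleCat.hom_ext h))

theorem exists_eq_smul_one_of_commute [IsAlgClosed k] (V : FDRep k G) [Simple V]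
    (f : V →ₗ[k] V) (hf : ∀ g, Commute (V.ρ g) f) : ∃ μ : k, f = μ • 1 := by
  obtain ⟨μ, hμ⟩ := endomorphism_simple_eq_smul_id k (homOfCommute V f hf)
  exact ⟨μ, congr_arg (fun φ : V ⟶ V => φ.hom.hom.hom) hμ.symm⟩

end Schur

section NormalSubgroup

variable {k G : Type u} [Field k] [Group G] [IsAlgClosed k] (V : FDRep k G) [Simple V]
  (N : Subgroup G) [Fintype N] [N.Normal]

theorem norm_comp_subtype_eq_zero_or_eq :
    Representation.norm (V.ρ.comp N.subtype) = 0 ∨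
      Representation.norm (V.ρ.comp N.subtype) = (Fintype.card N : k) • 1 := by
  obtain ⟨μ, hμ⟩ := exists_eq_smul_one_of_commute V _
    (Representation.commute_norm_comp_subtype V.ρ N)
  have hsq : (μ * μ) • (1 : Module.End k V) = (Fintype.card N * μ) • 1 := by
    simpa [hμ, smul_smul, ← Nat.cast_smul_eq_nsmul k] using
      Representation.norm_mul_norm (V.ρ.comp N.subtype)
  have hμ' : μ * (μ - Fintype.card N) = 0 := by
    rw [mul_sub, sub_eq_zero, smul_left_injective k (one_ne_zero_of_simple V) hsq, mul_comm]
  rcases mul_eq_zero.mp hμ' with h | h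
  · exact .inl (by rw [hμ, h, zero_smul])
  · exact .inr (by rw [hμ, sub_eq_zero.mp h])

theorem sum_character_mul_eq_zero_or_eq (g : G) :
    ∑ n : N, V.character (g * n) = 0 ∨
      ∑ n : N, V.character (g * n) = Fintype.card N * V.character g := by
  have htrace : ∑ n : N, V.character (g * n) =
      LinearMap.trace k V (V.ρ g * Representation.norm (V.ρ.comp N.subtype)) := by
    simp [character, Representation.norm, Finset.mul_sum, map_mul]
  rcases norm_comp_subtype_eq_zero_or_eq V N with h | h
  · exact .inl (by rw [htrace, h, mul_zero, map_zero])
  · exact .inr (by rw [htrace, h, mul_smul_comm, mul_one, map_smul, smul_eq_mul, character])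

end NormalSubgroup

section Twist

variable {k G : Type u} [Field k] [Group G]

noncomputable def twist (V : FDRep k G) (σ : G →* k) : FDRep k G :=
  FDRep.of (V := V)
    { toFun g := σ g • V.ρ g
      map_one' := by rw [map_one, map_one, one_smul]
      map_mul' g h := by rw [map_mul, map_mul, smul_mul_smul_comm] }

theorem char_twist (V : FDRep k G) (σ : G →* k) (g : G) :
    (twist V σ).character g = σ g * V.character g :=
  LinearMap.map_smul _ _ _

theorem simple_twist [IsAlgClosed k] [CharZero k] [Fintype G] (V : FDRep k G) [Simple V]
    (σ : G →* k) : Simple (twist V σ) := by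
  have hσ (g : G) : σ g * σ g⁻¹ = 1 := by rw [← map_mul, mul_inv_cancel, map_one]
  rw [simple_iff_char_is_norm_one, ← (simple_iff_char_is_norm_one V).mp ‹_›]
  refine Finset.sum_congr rfl fun g _ => ?_
  rw [char_twist, char_twist]
  linear_combination (V.character g * V.character g⁻¹) * hσ g

end Twist

end FDRep

namespace IrrChar

variable {G : Type} [Group G] [Fintype G]

theorem apply_eq_of_isConj : ∀ (χ : IrrChar G) ⦃x y : G⦄, IsConj x y → χ.1 x = χ.1 y := by
  rintro ⟨_, V, -, rfl⟩ x y h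
  obtain ⟨c, rfl⟩ := isConj_iff.mp h
  exact (FDRep.char_conj V x c).symm

theorem sum_mul_eq_zero_or_eq (χ : IrrChar G) (N : Subgroup G) [Fintype N] [N.Normal] (g : G) :
    ∑ n : N, χ.1 (g * n) = 0 ∨ ∑ n : N, χ.1 (g * n) = Fintype.card N * χ.1 g := by
  obtain ⟨_, V, _, rfl⟩ := χ
  exact FDRep.sum_character_mul_eq_zero_or_eq V N g

noncomputable def twist (χ : IrrChar G) (σ : G →* ℂ) : IrrChar G :=
  ⟨fun g => σ g * χ.1 g, by
    obtain ⟨V, _, hV⟩ := χ.2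
    exact ⟨FDRep.twist V σ, FDRep.simple_twist V σ,
      funext fun g => by rw [FDRep.char_twist, hV]⟩⟩

theorem twist_apply (χ : IrrChar G) (σ : G →* ℂ) (g : G) : (χ.twist σ).1 g = σ g * χ.1 g := rfl

theorem twist_twist (χ : IrrChar G) {σ : G →* ℂ} (hσ : ∀ g, σ g * σ g = 1) :
    (χ.twist σ).twist σ = χ :=
  Subtype.ext <| funext fun g => by rw [twist_apply, twist_apply, ← mul_assoc, hσ, one_mul]

end IrrChar

theorem apply_eq_of_swap_conjClasses_mk_eq {G M : Type*} [Monoid G]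
    [DecidableEq (ConjClasses G)] {f f' : G → M} (hf : ∀ ⦃x y⦄, IsConj x y → f x = f y)
    (hf' : ∀ ⦃x y⦄, IsConj x y → f' x = f' y) {a b : G}
    (hab : f' b = f a) (hba : f' a = f b)
    (hother : ∀ x, ¬IsConj x a → ¬IsConj x b → f' x = f x) {g h : G}
    (hgh : Equiv.swap (ConjClasses.mk a) (ConjClasses.mk b) (ConjClasses.mk g) =
      ConjClasses.mk h) : f' h = f g := by
  by_cases hga : ConjClasses.mk g = ConjClasses.mk a
  · rw [hga, Equiv.swap_apply_left, ConjClasses.mk_eq_mk_iff_isConj] at hgh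
    rw [ConjClasses.mk_eq_mk_iff_isConj] at hga
    rw [← hf' hgh, hab, hf hga]
  by_cases hgb : ConjClasses.mk g = ConjClasses.mk b
  · rw [hgb, Equiv.swap_apply_right, ConjClasses.mk_eq_mk_iff_isConj] at hgh
    rw [ConjClasses.mk_eq_mk_iff_isConj] at hgb
    rw [← hf' hgh, hba, hf hgb]
  rw [Equiv.swap_apply_of_ne_of_ne hga hgb, ConjClasses.mk_eq_mk_iff_isConj] at hgh
  rw [ConjClasses.mk_eq_mk_iff_isConj] at hga hgb
  rw [← hf' hgh, hother g hga hgb]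

open Equiv

def kleinFourFinset : Finset (Perm (Fin 4)) :=
  {1, swap 0 1 * swap 2 3, swap 0 2 * swap 1 3, swap 0 3 * swap 1 2}

def kleinFour : Subgroup (Perm (Fin 4)) where
  carrier := kleinFourFinset
  mul_mem' := by decide
  one_mem' := by decide
  inv_mem' := by decide

instance : DecidablePred (· ∈ kleinFour) := fun g =>
  inferInstanceAs (Decidable (g ∈ kleinFourFinset))

instance : kleinFour.Normal := ⟨by decide⟩

theorem card_kleinFour : Fintype.card kleinFour = 4 := by decide

theorem sum_kleinFour {M : Type*} [AddCommMonoid M] (f : Perm (Fin 4) → M) :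
    ∑ n : kleinFour, f n =
      f 1 + f (swap 0 1 * swap 2 3) + f (swap 0 2 * swap 1 3) + f (swap 0 3 * swap 1 2) := by
  rw [← Finset.sum_subtype (p := (· ∈ kleinFour)) kleinFourFinset (fun _ => Iff.rfl) f,
    kleinFourFinset, Finset.sum_insert (by decide), Finset.sum_insert (by decide),
    Finset.sum_pair (by decide), add_assoc, add_assoc]

theorem IrrChar.finRotate_eq_or_eq_neg (χ : IrrChar (Perm (Fin 4))) :
    χ.1 (finRotate 4) = χ.1 (swap 0 1) ∨ χ.1 (finRotate 4) = -χ.1 (swap 0 1) := by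
  have h₁ : IsConj (swap 0 1 * (swap 0 1 * swap 2 3) : Perm (Fin 4)) (swap 0 1) := by decide
  have h₂ : IsConj (swap 0 1 * (swap 0 2 * swap 1 3) : Perm (Fin 4)) (finRotate 4) := by decide
  have h₃ : IsConj (swap 0 1 * (swap 0 3 * swap 1 2) : Perm (Fin 4)) (finRotate 4) := by decide
  have hsum : ∑ n : kleinFour, χ.1 (swap 0 1 * (n : Perm (Fin 4))) =
      2 * χ.1 (swap 0 1) + 2 * χ.1 (finRotate 4) := by
    rw [sum_kleinFour fun n => χ.1 (swap 0 1 * n), mul_one, χ.apply_eq_of_isConj h₁,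
      χ.apply_eq_of_isConj h₂, χ.apply_eq_of_isConj h₃]
    ring
  rcases χ.sum_mul_eq_zero_or_eq kleinFour (swap 0 1) with h | h
  · rw [hsum] at h
    exact .inr (by linear_combination h / 2)
  · rw [hsum, card_kleinFour] at h
    exact .inl (by linear_combination h / 2)

def signChar (α : Type*) [DecidableEq α] [Fintype α] : Perm α →* ℂ :=
  (Int.castRingHom ℂ).toMonoidHom.comp ((Units.coeHom ℤ).comp Perm.sign)

theorem signChar_apply {α : Type*} [DecidableEq α] [Fintype α] (g : Perm α) :
    signChar α g = (Perm.sign g : ℤ) := rfl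

theorem signChar_mul_self {α : Type*} [DecidableEq α] [Fintype α] (g : Perm α) :
    signChar α g * signChar α g = 1 := by
  rw [← map_mul, signChar_apply, map_mul, Int.units_mul_self, Units.val_one, Int.cast_one]

theorem signChar_swap : signChar (Fin 4) (swap 0 1) = -1 := by
  simp [signChar_apply]

theorem signChar_finRotate : signChar (Fin 4) (finRotate 4) = -1 := by
  simp [signChar_apply]

theorem signChar_eq_one {g : Perm (Fin 4)} (h₂ : ¬IsConj g (swap 0 1))
    (h₄ : ¬IsConj g (finRotate 4)) : signChar (Fin 4) g = 1 := by
  have : ∀ g : Perm (Fin 4), IsConj g (swap 0 1) ∨ IsConj g (finRotate 4) ∨ Perm.sign g = 1 := by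
    decide
  rw [signChar_apply, ((this g).resolve_left h₂).resolve_left h₄, Units.val_one, Int.cast_one]

open scoped Classical in
noncomputable def irrCharSwap (χ : IrrChar (Perm (Fin 4))) : IrrChar (Perm (Fin 4)) :=
  if χ.1 (swap 0 1) = χ.1 (finRotate 4) then χ else χ.twist (signChar (Fin 4))

theorem irrCharSwap_involutive : Function.Involutive irrCharSwap := by
  intro χ
  by_cases hχ : χ.1 (swap 0 1) = χ.1 (finRotate 4)
  · simp only [irrCharSwap, if_pos hχ]
  · have htw : ¬(χ.twist (signChar (Fin 4))).1 (swap 0 1) =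
        (χ.twist (signChar (Fin 4))).1 (finRotate 4) := by
      rw [IrrChar.twist_apply, IrrChar.twist_apply, signChar_swap, signChar_finRotate]
      exact fun h => hχ (by linear_combination -h)
    simp only [irrCharSwap, if_neg hχ, if_neg htw]
    exact χ.twist_twist signChar_mul_self

theorem irrCharSwap_apply_eq (χ : IrrChar (Perm (Fin 4))) {g h : Perm (Fin 4)}
    (hgh : swap (ConjClasses.mk (swap 0 1)) (ConjClasses.mk (finRotate 4)) (ConjClasses.mk g) =
      ConjClasses.mk h) : (irrCharSwap χ).1 h = χ.1 g := by
  unfold irrCharSwap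
  split_ifs with hχ
  · exact apply_eq_of_swap_conjClasses_mk_eq χ.apply_eq_of_isConj χ.apply_eq_of_isConj
      hχ.symm hχ (fun _ _ _ => rfl) hgh
  have hneg := χ.finRotate_eq_or_eq_neg.resolve_left (Ne.symm hχ)
  refine apply_eq_of_swap_conjClasses_mk_eq χ.apply_eq_of_isConj
    (χ.twist (signChar (Fin 4))).apply_eq_of_isConj ?_ ?_ (fun x h₂ h₄ => ?_) hgh
  · rw [IrrChar.twist_apply, signChar_finRotate, hneg, neg_one_mul, neg_neg]
  · rw [IrrChar.twist_apply, signChar_swap, hneg, neg_one_mul]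
  · rw [IrrChar.twist_apply, signChar_eq_one h₂ h₄, one_mul]

theorem not_isConj_finRotate_map_swap (f : Perm (Fin 4) ≃* Perm (Fin 4)) :
    ¬IsConj (finRotate 4) (f (swap 0 1)) := by
  rintro ⟨c, hc⟩
  have h : orderOf (swap (0 : Fin 4) 1) ∣ 2 := orderOf_dvd_of_pow_eq_one (by decide)
  rw [← f.orderOf_eq, ← hc.orderOf_eq] at h
  exact absurd (orderOf_dvd_iff_pow_eq_one.mp h) (by decide)

theorem stmt17 :
    ∃ (α : ConjClasses (Equiv.Perm (Fin 4)) ≃ ConjClasses (Equiv.Perm (Fin 4)))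
      (β : IrrChar (Equiv.Perm (Fin 4)) ≃ IrrChar (Equiv.Perm (Fin 4))),
      (∀ (χ : IrrChar (Equiv.Perm (Fin 4))) (g h : Equiv.Perm (Fin 4)),
        α (ConjClasses.mk g) = ConjClasses.mk h → (β χ).1 h = χ.1 g) ∧
      α (ConjClasses.mk (Equiv.swap (0 : Fin 4) 1)) =
        ConjClasses.mk (finRotate 4) ∧
      ∀ f : Equiv.Perm (Fin 4) ≃* Equiv.Perm (Fin 4),
        ¬ ∀ g : Equiv.Perm (Fin 4),
            α (ConjClasses.mk g) = ConjClasses.mk (f g) := by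
  refine ⟨swap (ConjClasses.mk (swap 0 1)) (ConjClasses.mk (finRotate 4)),
    irrCharSwap_involutive.toPerm _, fun χ _ _ => irrCharSwap_apply_eq χ, swap_apply_left _ _,
    fun f hf => not_isConj_finRotate_map_swap f ?_⟩
  exact ConjClasses.mk_eq_mk_iff_isConj.mp ((swap_apply_left _ _).symm.trans (hf _))
end
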